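/- arXiv:0902.1090 — 4 statements merged into one kernel-verified Lean document; each statement's English description precedes it below -/
import Mathlib

section
/- Let p > 1, let y₀ < y₁ be real numbers, and let f : (y₀, y₁] → ℝ be four times continuously differentiable with f''''(y) = |f(y)|^{p-1} f(y) for all y ∈ (y₀, y₁]. Then there is no sequence (y_n) ⊂ (y₀, y₁] with y_n → y₀^+ such that f'(y_n) = 0 for every n and |f(y_n)| → ∞. In particular, oscillatory blow-up with limsup_{y→y₀^+} f(y) = +∞ and liminf_{y→y₀^+} f(y) = -∞ cannot occur. -/
open Set Filter

/-- derivative of `t ↦ |t|^(p+1)` for `p ≥ 1`. -/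
lemma abs_rpow_hasDerivAt (p : ℝ) (hp : 1 < p) (t : ℝ) :
    HasDerivAt (fun t : ℝ => |t| ^ (p + 1)) ((p + 1) * |t| ^ (p - 1) * t) t := by
  have h1 : (fun t : ℝ => |t| ^ (p + 1)) = fun t : ℝ => (t ^ 2) ^ ((p + 1) / 2) := by
    funext t
    rw [← sq_abs, ← Real.rpow_natCast |t| 2, ← Real.rpow_mul (abs_nonneg t)]
    congr 1; push_cast; ring
  rw [h1]
  have h2 : HasDerivAt (fun x : ℝ => x ^ ((p + 1) / 2))
      (((p + 1) / 2) * (t ^ 2) ^ ((p + 1) / 2 - 1)) (t ^ 2) :=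
    Real.hasDerivAt_rpow_const (Or.inr (by linarith))
  have h3 := hasDerivAt_pow 2 t
  have h4 := HasDerivAt.comp (h := fun y : ℝ => y ^ 2) t h2 h3
  have h5 : (t ^ 2 : ℝ) ^ ((p + 1) / 2 - 1) = |t| ^ (p - 1) := by
    rw [← sq_abs, ← Real.rpow_natCast |t| 2, ← Real.rpow_mul (abs_nonneg t)]
    congr 1; push_cast; ring
  refine h4.congr_deriv ?_
  rw [h5]; push_cast; ring

/-- for a `C⁴` solution of `f'''' = |f|^{p-1} f` on `(y₀, y₁]`, there is no
sequence of critical points `y_n → y₀⁺` with `|f(y_n)| → ∞`; in particular, oscillatory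
blow-up with `limsup_{y→y₀⁺} f = +∞` and `liminf_{y→y₀⁺} f = -∞` cannot occur. -/
theorem stmt_7 (p : ℝ) (hp : 1 < p) (y₀ y₁ : ℝ) (h01 : y₀ < y₁) (f : ℝ → ℝ)
    (hf : ContDiffOn ℝ 4 f (Set.Ioc y₀ y₁))
    (hODE : ∀ y ∈ Set.Ioc y₀ y₁,
      iteratedDerivWithin 4 f (Set.Ioc y₀ y₁) y = |f y| ^ (p - 1) * f y) :
    (¬ ∃ yn : ℕ → ℝ,
        (∀ n, yn n ∈ Set.Ioc y₀ y₁) ∧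
        Filter.Tendsto yn Filter.atTop (nhds y₀) ∧
        (∀ n, derivWithin f (Set.Ioc y₀ y₁) (yn n) = 0) ∧
        Filter.Tendsto (fun n => |f (yn n)|) Filter.atTop Filter.atTop) ∧
    ¬ ((∀ M : ℝ, ∃ᶠ y in nhdsWithin y₀ (Set.Ioc y₀ y₁), M < f y) ∧
        (∀ M : ℝ, ∃ᶠ y in nhdsWithin y₀ (Set.Ioc y₀ y₁), f y < M)) := by
  set s := Set.Ioc y₀ y₁ with hsdef
  have hsU : UniqueDiffOn ℝ s := uniqueDiffOn_Ioc y₀ y₁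
  have hconv : Convex ℝ s := convex_Ioc y₀ y₁
  set g : ℕ → ℝ → ℝ := fun k => iteratedDerivWithin k f s with hgdef
  have hp1 : (0:ℝ) < p + 1 := by linarith
  have hder : ∀ k : ℕ, k < 4 → ∀ x ∈ s, HasDerivWithinAt (g k) (g (k + 1) x) s x := by
    intro k hk x hx
    have hd : DifferentiableOn ℝ (g k) s :=
      hf.differentiableOn_iteratedDerivWithin (by exact_mod_cast hk) hsU
    have h := (hd x hx).hasDerivWithinAt
    rwa [show derivWithin (g k) s x = g (k + 1) x from
      (congrFun iteratedDerivWithin_succ x).symm] at h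
  have hg0 : g 0 = f := by simp [hgdef]
  -- the energy
  set E : ℝ → ℝ := fun y =>
    g 3 y * g 1 y - (1 / 2) * (g 2 y) ^ 2 - (1 / (p + 1)) * |f y| ^ (p + 1) with hEdef
  have hE0 : ∀ x ∈ s, HasDerivWithinAt E 0 s x := by
    intro x hx
    have h1 := hder 0 (by norm_num) x hx
    have h2 := hder 1 (by norm_num) x hx
    have h3 := hder 2 (by norm_num) x hx
    have h4 := hder 3 (by norm_num) x hx
    rw [hg0] at h1
    have habs : HasDerivWithinAt (fun y => |f y| ^ (p + 1))
        (((p + 1) * |f x| ^ (p - 1) * f x) * g 1 x) s x :=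
      (abs_rpow_hasDerivAt p hp (f x)).comp_hasDerivWithinAt x h1
    have hprod : HasDerivWithinAt (fun y => g 3 y * g 1 y)
        (g 4 x * g 1 x + g 3 x * g 2 x) s x := h4.mul h2
    have hsq : HasDerivWithinAt (fun y => (g 2 y) ^ 2) (2 * g 2 x * g 3 x) s x := by
      simpa using h3.fun_pow 2
    have hE := (hprod.sub (hsq.const_mul (1 / 2))).sub (habs.const_mul (1 / (p + 1)))
    have hzero : g 4 x * g 1 x + g 3 x * g 2 x - 1 / 2 * (2 * g 2 x * g 3 x) -
        1 / (p + 1) * ((p + 1) * |f x| ^ (p - 1) * f x * g 1 x) = 0 := by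
      have h5 : g 4 x = |f x| ^ (p - 1) * f x := hODE x hx
      rw [h5]
      field_simp
      ring
    rwa [hzero] at hE
  have hEconst : ∀ x ∈ s, E x = E y₁ := by
    intro x hx
    have hy1 : y₁ ∈ s := ⟨h01, le_refl y₁⟩
    have h := Convex.norm_image_sub_le_of_norm_hasDerivWithin_le (f' := fun _ => (0:ℝ))
      (C := 0) hE0 (fun x _ => by simp) hconv hy1 hx
    simp only [zero_mul, Real.norm_eq_abs] at h
    exact sub_eq_zero.mp (abs_nonpos_iff.mp h)
  -- Part 1
  have part1 : ¬ ∃ yn : ℕ → ℝ,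
      (∀ n, yn n ∈ s) ∧
      Filter.Tendsto yn Filter.atTop (nhds y₀) ∧
      (∀ n, derivWithin f s (yn n) = 0) ∧
      Filter.Tendsto (fun n => |f (yn n)|) Filter.atTop Filter.atTop := by
    rintro ⟨yn, hmem, _, hcrit, htend⟩
    have hEb : ∀ n, E y₁ ≤ -(1 / (p + 1)) * |f (yn n)| ^ (p + 1) := by
      intro n
      have h1 : g 1 (yn n) = 0 := by
        rw [hgdef]
        simp only
        rw [iteratedDerivWithin_one]
        exact hcrit n
      have hEyn : E (yn n) ≤ -(1 / (p + 1)) * |f (yn n)| ^ (p + 1) := by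
        simp only [hEdef, h1, mul_zero, zero_sub]
        nlinarith [sq_nonneg (g 2 (yn n))]
      exact (hEconst (yn n) (hmem n)) ▸ hEyn
    have h2 : Tendsto (fun n => -(1 / (p + 1)) * |f (yn n)| ^ (p + 1)) atTop atBot := by
      have hr : Tendsto (fun n => |f (yn n)| ^ (p + 1)) atTop atTop :=
        (tendsto_rpow_atTop hp1).comp htend
      exact Tendsto.const_mul_atTop_of_neg (by rw [neg_lt_zero]; positivity) hr
    obtain ⟨n, hn⟩ := (h2.eventually (eventually_lt_atBot (E y₁))).exists
    exact absurd (hEb n) (not_le.mpr hn)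
  refine ⟨part1, ?_⟩
  rintro ⟨hsup, hinf⟩
  -- extract points close to y₀ with large / small values
  have hget : ∀ (M ε : ℝ), 0 < ε →
      ((∃ y ∈ s, y < y₀ + ε ∧ M < f y) ∧ (∃ y ∈ s, y < y₀ + ε ∧ f y < M)) := by
    intro M ε hε
    have hev : ∀ᶠ y in nhdsWithin y₀ s, y < y₀ + ε :=
      (eventually_lt_nhds (by linarith : y₀ < y₀ + ε)).filter_mono nhdsWithin_le_nhds
    have hmem : ∀ᶠ y in nhdsWithin y₀ s, y ∈ s := self_mem_nhdsWithin
    constructor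
    · obtain ⟨y, h1, h2, h3⟩ := ((hsup M).and_eventually (hev.and hmem)).exists
      exact ⟨y, h3, h2, h1⟩
    · obtain ⟨y, h1, h2, h3⟩ := ((hinf M).and_eventually (hev.and hmem)).exists
      exact ⟨y, h3, h2, h1⟩
  have key : ∀ n : ℕ, ∃ c, c ∈ s ∧ c < y₀ + 1 / (n + 1) ∧
      derivWithin f s c = 0 ∧ (n : ℝ) < f c := by
    intro n
    have hεn : (0:ℝ) < 1 / (n + 1) := by positivity
    obtain ⟨b2, hb2s, hb2lt, hb2f⟩ := (hget n (1 / (n + 1)) hεn).2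
    obtain ⟨a, has, halt, haf⟩ := (hget n (b2 - y₀) (by linarith [hb2s.1])).1
    obtain ⟨b1, hb1s, hb1lt, hb1f⟩ := (hget n (a - y₀) (by linarith [has.1])).2
    have hb1a : b1 < a := by linarith [hb1lt]
    have hab2 : a < b2 := by linarith [halt]
    have hsub : Icc b1 b2 ⊆ s := fun x hx => ⟨lt_of_lt_of_le hb1s.1 hx.1, hx.2.trans hb2s.2⟩
    obtain ⟨c, hcmem, hcmax⟩ := isCompact_Icc.exists_isMaxOn ⟨b1, le_refl b1, by linarith⟩
      (hf.continuousOn.mono hsub)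
    have hfc : (n : ℝ) < f c := lt_of_lt_of_le haf (hcmax ⟨hb1a.le, hab2.le⟩)
    have hcb1 : b1 < c := lt_of_le_of_ne hcmem.1 (fun h => by rw [← h] at hfc; linarith)
    have hcb2 : c < b2 := lt_of_le_of_ne hcmem.2 (fun h => by rw [h] at hfc; linarith)
    have hcs : c ∈ s := hsub hcmem
    have hnhds : s ∈ nhds c := by
      rw [hsdef]
      exact mem_of_superset (Ioo_mem_nhds (lt_of_lt_of_le hb1s.1 hcmem.1)
        (lt_of_lt_of_le hcb2 hb2s.2)) Ioo_subset_Ioc_self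
    have hloc : IsLocalMax f c := hcmax.isLocalMax (Icc_mem_nhds hcb1 hcb2)
    refine ⟨c, hcs, lt_of_lt_of_le hcb2 hb2lt.le, ?_, hfc⟩
    rw [derivWithin_of_mem_nhds hnhds]
    exact hloc.deriv_eq_zero
  choose c hc1 hc2 hc3 hc4 using key
  apply part1
  refine ⟨c, hc1, ?_, hc3, ?_⟩
  · have hlow : Tendsto (fun _ : ℕ => y₀) atTop (nhds y₀) := tendsto_const_nhds
    have hhigh : Tendsto (fun n : ℕ => y₀ + 1 / (n + 1)) atTop (nhds y₀) := by
      have := tendsto_one_div_add_atTop_nhds_zero_nat (𝕜 := ℝ)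
      simpa using (tendsto_const_nhds (x := y₀)).add this
    exact tendsto_of_tendsto_of_tendsto_of_le_of_le hlow hhigh
      (fun n => (hc1 n).1.le) (fun n => (hc2 n).le)
  · apply tendsto_atTop_mono (fun n => ?_) tendsto_natCast_atTop_atTop
    exact (le_abs_self (f (c n))).trans' (hc4 n).le
end

section
/- Let p > 1, let Φ(m) := m(m-1)(m-2)(m-3), and set K := p·Φ(-4/(p-1)). Then: (i) the equation Φ(m) = K has exactly two real solutions m_- < m _+; (ii) the larger solution satisfies m_+ > 3 + 4/(p-1) > 3; (iii) m_- = 3 - m_+, hence m_- < -4/(p-1) < 0; and (iv) the remaining two roots of the complex polynomial Φ(z) - K are non-real complex conjugates, each with real part equal to 3/2. -/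
/-- `Φ(m) = m(m-1)(m-2)(m-3)`. -/
noncomputable def Phi (m : ℝ) : ℝ := m * (m - 1) * (m - 2) * (m - 3)

set_option maxHeartbeats 1000000 in
/-- with `K = p Φ(-4/(p-1))`: (i) `Φ(m) = K` has exactly two real solutions
`m₋ < m₊`; (ii) `m₊ > 3 + 4/(p-1) > 3`; (iii) `m₋ = 3 - m₊`, hence `m₋ < -4/(p-1) < 0`;
(iv) the remaining two roots of the complex polynomial `Φ(z) - K` are non-real complex
conjugates, each with real part `3/2`. -/
theorem stmt_11 (p : ℝ) (hp : 1 < p) :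
    ∃ mm mp : ℝ, mm < mp ∧
      Phi mm = p * Phi (-4 / (p - 1)) ∧
      Phi mp = p * Phi (-4 / (p - 1)) ∧
      (∀ m : ℝ, Phi m = p * Phi (-4 / (p - 1)) → m = mm ∨ m = mp) ∧
      3 + 4 / (p - 1) < mp ∧ (3 : ℝ) < 3 + 4 / (p - 1) ∧
      mm = 3 - mp ∧ mm < -4 / (p - 1) ∧ (-4 / (p - 1) : ℝ) < 0 ∧
      ∃ z : ℂ, z.im ≠ 0 ∧ z.re = 3 / 2 ∧
        z * (z - 1) * (z - 2) * (z - 3) = ((p * Phi (-4 / (p - 1)) : ℝ) : ℂ) ∧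
        (starRingEnd ℂ z) * (starRingEnd ℂ z - 1) * (starRingEnd ℂ z - 2) *
            (starRingEnd ℂ z - 3) = ((p * Phi (-4 / (p - 1)) : ℝ) : ℂ) ∧
        ∀ w : ℂ, w * (w - 1) * (w - 2) * (w - 3) = ((p * Phi (-4 / (p - 1)) : ℝ) : ℂ) →
          w = (mm : ℂ) ∨ w = (mp : ℂ) ∨ w = z ∨ w = starRingEnd ℂ z := by
  have hp1 : (0 : ℝ) < p - 1 := by linarith
  set K : ℝ := p * Phi (-4 / (p - 1)) with hKdef
  have hPhi : Phi (-4 / (p - 1)) =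
      ((3/2 + 4/(p-1))^2 - 9/4) * ((3/2 + 4/(p-1))^2 - 1/4) := by
    simp only [Phi]; field_simp; ring
  have hq0 : (0:ℝ) < 4 / (p-1) := by positivity
  set q : ℝ := 4 / (p - 1) with hqdef
  set u : ℝ := (3/2 + q)^2 with hudef
  have hKQ : K = p * ((u - 9/4) * (u - 1/4)) := by rw [hKdef, hPhi]
  have hu : (9:ℝ)/4 < u := by rw [hudef]; nlinarith
  have hQpos : (0:ℝ) < (u - 9/4) * (u - 1/4) := by nlinarith
  have hKgtQ : (u - 9/4) * (u - 1/4) < K := by nlinarith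
  have hKid : K * (p-1)^4 = 8*p*(p+3)*(p+1)*(3*p+1) := by
    rw [hKQ, hudef, hqdef]; field_simp; ring
  have hKbig : (9:ℝ)/16 < K := by nlinarith [pow_pos hp1 4, sq_nonneg (p-1), sq_nonneg p, mul_pos (mul_pos (by linarith : (0:ℝ) < p) (by linarith : (0:ℝ) < p+3)) (mul_pos (by linarith : (0:ℝ) < p+1) (by linarith : (0:ℝ) < 3*p+1))]
  have h1K : (0:ℝ) < 1 + K := by linarith
  set s : ℝ := Real.sqrt (1 + K) with hsdef
  have hs2 : s ^ 2 = 1 + K := Real.sq_sqrt h1K.le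
  have hs0 : 0 < s := Real.sqrt_pos.mpr h1K
  have hs54 : (5:ℝ)/4 < s := by nlinarith
  set r : ℝ := Real.sqrt (5/4 + s) with hrdef
  have hr2 : r ^ 2 = 5/4 + s := Real.sq_sqrt (by linarith)
  have hr0 : 0 < r := Real.sqrt_pos.mpr (by linarith)
  set w : ℝ := Real.sqrt (s - 5/4) with hwdef
  have hw2 : w ^ 2 = s - 5/4 := Real.sq_sqrt (by linarith)
  have hw0 : 0 < w := Real.sqrt_pos.mpr (by linarith)
  set zC : ℂ := ((3/2 : ℝ) : ℂ) + (w : ℂ) * Complex.I with hzC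
  have hzre : zC.re = 3/2 := by simp [hzC]
  have hzim : zC.im = w := by simp [hzC]
  have hconj : (starRingEnd ℂ) zC = ((3/2 : ℝ) : ℂ) - (w : ℂ) * Complex.I := by
    rw [hzC, map_add, map_mul, Complex.conj_I, Complex.conj_ofReal, Complex.conj_ofReal]; ring
  have h1 : (r : ℂ)^2 = 5/4 + (s : ℂ) := by rw [← Complex.ofReal_pow, hr2]; push_cast; ring
  have h2 : (w : ℂ)^2 = (s : ℂ) - 5/4 := by rw [← Complex.ofReal_pow, hw2]; push_cast; ring
  have h3 : (s : ℂ)^2 = 1 + (K : ℂ) := by rw [← Complex.ofReal_pow, hs2]; push_cast; ring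
  have key : ∀ W : ℂ, W*(W-1)*(W-2)*(W-3) - ((K:ℝ):ℂ) =
      (W - ((3/2 - r : ℝ):ℂ)) * (W - ((3/2 + r : ℝ):ℂ)) * (W - zC) * (W - starRingEnd ℂ zC) := by
    intro W
    rw [hconj, hzC]
    push_cast
    linear_combination (W^2 - 3*W + 9/4 + (w:ℂ)^2) * h1 +
      (-(W^2 - 3*W + 9/4 - 5/4 - (s:ℂ))) * h2 + h3 +
      ((W - 3/2)^2 - (r:ℂ)^2) * (w:ℂ)^2 * Complex.I_sq
  have hmmK : Phi (3/2 - r) = K := by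
    have h := key ((3/2 - r : ℝ) : ℂ)
    simp only [sub_self, zero_mul, mul_zero] at h
    have h' : ((Phi (3/2 - r) : ℝ) : ℂ) = ((K : ℝ) : ℂ) := by
      simp only [Phi]; push_cast at h ⊢; linear_combination h
    exact_mod_cast h'
  have hmpK : Phi (3/2 + r) = K := by
    have h := key ((3/2 + r : ℝ) : ℂ)
    simp only [sub_self, zero_mul, mul_zero] at h
    have h' : ((Phi (3/2 + r) : ℝ) : ℂ) = ((K : ℝ) : ℂ) := by
      simp only [Phi]; push_cast at h ⊢; linear_combination h
    exact_mod_cast h'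
  have hru : u < r ^ 2 := by
    have e : (u - 5/4)^2 = (u - 9/4)*(u - 1/4) + 1 := by ring
    have h1' : (u - 5/4)^2 < s^2 := by rw [hs2, e]; linarith
    have h2' : u - 5/4 < s := by nlinarith [h1', hs0, hu]
    rw [hr2]; linarith
  have hmpgt : 3 + q < 3/2 + r := by
    rw [hudef] at hru
    nlinarith [hru, hr0, hq0]
  have hnegq : -4 / (p - 1) = -q := by rw [hqdef]; ring
  refine ⟨3/2 - r, 3/2 + r, by linarith, hmmK, hmpK, ?_, by linarith, by linarith,
    by ring, by rw [hnegq]; linarith, by rw [hnegq]; linarith, zC, ?_, hzre, ?_, ?_, ?_⟩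
  · -- real uniqueness
    intro m hm
    have hmC : (m : ℂ) * ((m:ℂ) - 1) * ((m:ℂ) - 2) * ((m:ℂ) - 3) = ((K:ℝ):ℂ) := by
      have : ((Phi m : ℝ) : ℂ) = ((K:ℝ):ℂ) := by exact_mod_cast hm
      simp only [Phi] at this; push_cast at this ⊢; linear_combination this
    have h := key (m : ℂ)
    rw [hmC, sub_self] at h
    rcases mul_eq_zero.mp h.symm with h' | h4
    · rcases mul_eq_zero.mp h' with h'' | h3'
      · rcases mul_eq_zero.mp h'' with ha | hb
        · left; exact_mod_cast sub_eq_zero.mp ha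
        · right; exact_mod_cast sub_eq_zero.mp hb
      · exfalso
        have := congrArg Complex.im (sub_eq_zero.mp h3')
        rw [Complex.ofReal_im, hzim] at this
        exact hw0.ne this
    · exfalso
      have := congrArg Complex.im (sub_eq_zero.mp h4)
      rw [Complex.ofReal_im, Complex.conj_im, hzim] at this
      exact hw0.ne' (by linarith)
  · rw [hzim]; exact hw0.ne'
  · -- zC equation
    have h := key zC
    simp only [sub_self, zero_mul, mul_zero] at h
    exact sub_eq_zero.mp h
  · -- conj zC equation
    have h := key (starRingEnd ℂ zC)
    simp only [sub_self, zero_mul, mul_zero] at h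
    exact sub_eq_zero.mp h
  · -- complex uniqueness
    intro W hW
    have h := key W
    rw [hW, sub_self] at h
    rcases mul_eq_zero.mp h.symm with h' | h4
    · rcases mul_eq_zero.mp h' with h'' | h3'
      · rcases mul_eq_zero.mp h'' with ha | hb
        · exact Or.inl (sub_eq_zero.mp ha)
        · exact Or.inr (Or.inl (sub_eq_zero.mp hb))
      · exact Or.inr (Or.inr (Or.inl (sub_eq_zero.mp h3')))
    · exact Or.inr (Or.inr (Or.inr (sub_eq_zero.mp h4)))
end

section
/- For every natural number k, define the generalized Hermite polynomial ψ_k(y) := Σ_{j=0}^{⌊k/4⌋} (1/j!)·(d/dy)^{4j}[y^k] (a monic polynomial of degree k whose leading term is y^k). Then ψ_k is an eigenfunction of the adjoint Hermite operator B* with eigenvalue -k/4; that is, -ψ_k''''(y) - (1/4)·y·ψ_k'(y) = -(k/4)·ψ_k(y) for all y ∈ ℝ. -/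
open Polynomial Finset

noncomputable def genHermite (k : ℕ) (y : ℝ) : ℝ :=
  ∑ j ∈ Finset.range (k / 4 + 1),
    (1 / (j.factorial : ℝ)) * iteratedDeriv (4 * j) (fun w : ℝ => w ^ k) y

noncomputable def QH (k : ℕ) : Polynomial ℝ :=
  ∑ j ∈ Finset.range (k / 4 + 1),
    C (1 / (j.factorial : ℝ)) * derivative^[4 * j] (X ^ k)

lemma iteratedDeriv_polyEval (p : Polynomial ℝ) (n : ℕ) :
    iteratedDeriv n (fun x => p.eval x) = fun x => (derivative^[n] p).eval x := by
  induction n with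
  | zero => simp
  | succ n ih =>
      rw [iteratedDeriv_succ, ih]
      funext x
      rw [Function.iterate_succ_apply']
      exact Polynomial.deriv _

lemma genHermite_eq (k : ℕ) : genHermite k = fun y => (QH k).eval y := by
  funext y
  unfold genHermite QH
  rw [Polynomial.eval_finset_sum]
  refine Finset.sum_congr rfl fun j _ => ?_
  have : (fun w : ℝ => w ^ k) = fun x => (X ^ k : Polynomial ℝ).eval x := by
    funext x; simp
  rw [this, iteratedDeriv_polyEval]
  simp

lemma X_mul_derivative_X_pow (n : ℕ) :
    (X : Polynomial ℝ) * derivative (X ^ n) = C (n : ℝ) * X ^ n := by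
  cases n with
  | zero => simp
  | succ n =>
      rw [derivative_X_pow]
      push_cast
      ring

lemma key (k : ℕ) :
    derivative^[4] (QH k) + C (1/4 : ℝ) * X * derivative (QH k)
      = C ((k : ℝ)/4) * QH k := by
  unfold QH
  rw [iterate_derivative_sum, map_sum, Finset.mul_sum, Finset.mul_sum]
  have hA : ∑ j ∈ Finset.range (k/4+1),
      derivative^[4] (C (1/(j.factorial : ℝ)) * derivative^[4 * j] (X ^ k))
      = ∑ j ∈ Finset.range (k/4+1),
        C ((j : ℝ) * (1/(j.factorial : ℝ))) * derivative^[4 * j] (X ^ k) := by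
    set f : ℕ → Polynomial ℝ :=
      fun i => C ((i : ℝ) * (1/(i.factorial : ℝ))) * derivative^[4 * i] (X ^ k) with hf
    have h1 : ∀ j, derivative^[4] (C (1/(j.factorial : ℝ)) * derivative^[4 * j] (X ^ k))
        = f (j + 1) := by
      intro j
      rw [hf]
      rw [iterate_derivative_C_mul, ← Function.iterate_add_apply]
      have h2 : 4 + 4 * j = 4 * (j + 1) := by ring
      rw [h2]
      congr 1
      rw [Nat.factorial_succ]
      have : (j.factorial : ℝ) ≠ 0 := Nat.cast_ne_zero.mpr j.factorial_ne_zero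
      push_cast
      field_simp
    have hzero : f 0 = 0 := by simp [hf]
    have htop : f (k/4 + 1) = 0 := by
      have hk : k < 4 * (k/4 + 1) := by omega
      simp [hf, iterate_derivative_X_pow_eq_C_mul,
        Nat.descFactorial_eq_zero_iff_lt.mpr hk]
    calc ∑ j ∈ Finset.range (k/4+1),
          derivative^[4] (C (1/(j.factorial : ℝ)) * derivative^[4 * j] (X ^ k))
        = ∑ j ∈ Finset.range (k/4+1), f (j + 1) := by
          exact Finset.sum_congr rfl fun j _ => h1 j
      _ = (∑ j ∈ Finset.range (k/4+1), f (j + 1)) + f 0 := by rw [hzero, add_zero]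
      _ = ∑ j ∈ Finset.range (k/4+2), f j := (Finset.sum_range_succ' f (k/4+1)).symm
      _ = (∑ j ∈ Finset.range (k/4+1), f j) + f (k/4+1) := Finset.sum_range_succ f (k/4+1)
      _ = ∑ j ∈ Finset.range (k/4+1), f j := by rw [htop, add_zero]
  rw [hA, ← Finset.sum_add_distrib]
  refine Finset.sum_congr rfl fun j hj => ?_
  have hjle : 4 * j ≤ k := by
    have := Finset.mem_range.mp hj
    omega
  have hB : C (1/4 : ℝ) * X * derivative (C (1/(j.factorial : ℝ)) * derivative^[4 * j] (X ^ k))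
      = C ((((k : ℝ) - 4 * j)/4) * (1/(j.factorial : ℝ))) * derivative^[4 * j] (X ^ k) := by
    rw [iterate_derivative_X_pow_eq_C_mul, derivative_C_mul, derivative_C_mul]
    have : C (1/4 : ℝ) * X *
        (C (1/(j.factorial : ℝ)) * (C ((k.descFactorial (4*j) : ℝ)) * derivative (X ^ (k - 4*j))))
        = C (1/4 : ℝ) * C (1/(j.factorial : ℝ)) * C ((k.descFactorial (4*j) : ℝ)) *
          (X * derivative (X ^ (k - 4*j))) := by ring
    rw [this, X_mul_derivative_X_pow]
    have hcast : ((k - 4*j : ℕ) : ℝ) = (k : ℝ) - 4 * j := by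
      push_cast [hjle]; ring
    rw [hcast]
    rw [show ((((k : ℝ) - 4 * j)/4) * (1/(j.factorial : ℝ)))
        = (1/4 : ℝ) * (1/(j.factorial : ℝ)) * ((k : ℝ) - 4 * j) by ring]
    simp only [C_mul]
    ring
  rw [hB, ← add_mul, ← mul_assoc, ← C_mul, ← C_add]
  congr 1
  ring

/-- `ψ_k` is an eigenfunction of the adjoint Hermite operator
`B*ψ = -ψ'''' - (1/4) y ψ'` with eigenvalue `-k/4`. -/
theorem stmt_14 (k : ℕ) :
    ∀ y : ℝ,
      - iteratedDeriv 4 (genHermite k) y - (1 / 4) * y * deriv (genHermite k) y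
        = -((k : ℝ) / 4) * genHermite k y := by
  intro y
  rw [genHermite_eq, iteratedDeriv_polyEval]
  have hd : deriv (fun y => (QH k).eval y) y = (derivative (QH k)).eval y :=
    Polynomial.deriv _
  rw [hd]
  have := congrArg (fun p => Polynomial.eval y p) (key k)
  simp only [eval_add, eval_mul, eval_C, eval_X] at this
  linarith
end

section
/- Let F : ℝ → ℝ be infinitely differentiable and satisfy B F = 0 on ℝ, i.e. -F''''(y) + (1/4)·y·F'(y) + (1/4)·F(y) = 0 for all y. Then for every natural number k, the k-th derivative ψ := F^{(k)} satisfies B ψ = -(k/4)·ψ on ℝ, i.e. -ψ''''(y) + (1/4)·y·ψ'(y) + (1/4)·ψ(y) = -(k/4)·ψ(y) for all y; thus the successive derivatives of the rescaled fundamental-solution kernel are eigenfunctions of B with eigenvalues -k/4. -/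
/-- if a smooth `F` satisfies `BF = 0`, i.e.
`-F'''' + (1/4) y F' + (1/4) F = 0` on `ℝ`, then for every `k` the derivative
`ψ = F^{(k)}` satisfies `Bψ = -(k/4) ψ` on `ℝ`. -/
theorem stmt_15 (F : ℝ → ℝ) (hF : ContDiff ℝ (⊤ : ℕ∞) F)
    (hBF : ∀ y : ℝ, - iteratedDeriv 4 F y + (1 / 4) * y * deriv F y + (1 / 4) * F y = 0) :
    ∀ (k : ℕ) (y : ℝ),
      - iteratedDeriv 4 (iteratedDeriv k F) y
          + (1 / 4) * y * deriv (iteratedDeriv k F) y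
          + (1 / 4) * iteratedDeriv k F y
        = -((k : ℝ) / 4) * iteratedDeriv k F y := by
  intro k
  induction k with
  | zero => intro y; simpa using hBF y
  | succ k ih =>
    intro y
    set ψ := iteratedDeriv k F with hψ
    have hψc : ContDiff ℝ (⊤ : ℕ∞) ψ := by
      rw [hψ, iteratedDeriv_eq_iterate]
      exact (ContDiff.iterate_deriv k) (hF.of_le (by simp))
    have hdn : ∀ n : ℕ, Differentiable ℝ (iteratedDeriv n ψ) := by
      intro n
      have : ContDiff ℝ (⊤ : ℕ∞) (iteratedDeriv n ψ) := by
        rw [iteratedDeriv_eq_iterate]; exact (ContDiff.iterate_deriv n) hψc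
      exact this.differentiable (by simp)
    have hdψ : Differentiable ℝ (deriv ψ) := by
      have := hdn 1; rwa [iteratedDeriv_one] at this
    have h1 : HasDerivAt (fun y => - iteratedDeriv 4 ψ y + (1 / 4) * y * deriv ψ y
        + (1 / 4) * ψ y)
        (- deriv (iteratedDeriv 4 ψ) y + ((1 / 4) * deriv ψ y
          + (1 / 4) * y * deriv (deriv ψ) y) + (1 / 4) * deriv ψ y) y := by
      have hA : HasDerivAt (iteratedDeriv 4 ψ) (deriv (iteratedDeriv 4 ψ) y) y :=
        (hdn 4 y).hasDerivAt
      have h1' : HasDerivAt (fun y : ℝ => (1 / 4) * y) (1 / 4) y := by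
        simpa using (hasDerivAt_id y).const_mul (1 / 4 : ℝ)
      have h2' : HasDerivAt (deriv ψ) (deriv (deriv ψ) y) y := (hdψ y).hasDerivAt
      have hC : HasDerivAt (fun y => (1 / 4) * ψ y) ((1 / 4) * deriv ψ y) y :=
        (hψc.differentiable (by simp) y).hasDerivAt.const_mul (1 / 4)
      exact (hA.neg.add (h1'.mul h2')).add hC
    have h2 : HasDerivAt (fun y => -((k : ℝ) / 4) * ψ y) (-((k : ℝ) / 4) * deriv ψ y) y :=
      (hψc.differentiable (by simp) y).hasDerivAt.const_mul _
    have hfun : (fun y => - iteratedDeriv 4 ψ y + (1 / 4) * y * deriv ψ y + (1 / 4) * ψ y)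
        = fun y => -((k : ℝ) / 4) * ψ y := funext ih
    rw [hfun] at h1
    have key := h1.unique h2
    have e1 : iteratedDeriv (k + 1) F = deriv ψ := iteratedDeriv_succ
    have e2 : iteratedDeriv 4 (deriv ψ) = deriv (iteratedDeriv 4 ψ) :=
      (iteratedDeriv_succ' (n := 4) (f := ψ)).symm.trans iteratedDeriv_succ
    rw [e1, e2]
    push_cast
    linarith [key]
end
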